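/- arXiv:2404.11985 — 6 statements merged into one kernel-verified Lean document; each statement's English description precedes it below -/
import Mathlib

section
/- Characterization of macroscopic states (Theorem 1): Let P = {P_x}_{x∈X} be a POVM on ℂ^d with all volume terms V_x = Tr[P_x] strictly positive. A density matrix m is macroscopic for P, i.e. satisfies m = Σ_x Tr[P_x m] P_x / V_x, if and only if there exist a PVM Π = {Π_y}_{y∈Y} with Π ⪯ P together with nonnegative real coefficients c_y ≥ 0 such that m = Σ_y c_y Π_y. -/
open MeasureTheory Matrix Finset Filter
open scoped ComplexOrder

noncomputable section

/-- Borel-measurable structure on `d × d` complex matrices (entrywise). -/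
instance matrixMeasurableSpace {d : ℕ} : MeasurableSpace (Matrix (Fin d) (Fin d) ℂ) :=
  inferInstanceAs (MeasurableSpace ((Fin d) → (Fin d) → ℂ))

/-- The maximally mixed state `u = I / d` on `ℂ^d`. -/
def mmix (d : ℕ) : Matrix (Fin d) (Fin d) ℂ := (d : ℂ)⁻¹ • 1

/-- Observational entropy of the state `ρ` with respect to the POVM `P = {P_x}`:
`S_P(ρ) = -∑_x Tr[P_x ρ] · log (Tr[P_x ρ] / Tr[P_x])` (natural log, `0 · log 0 = 0`). -/
def obsEnt {d : ℕ} {X : Type*} [Fintype X]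
    (P : X → Matrix (Fin d) (Fin d) ℂ) (ρ : Matrix (Fin d) (Fin d) ℂ) : ℝ :=
  -∑ x, ((P x * ρ).trace.re) * Real.log (((P x * ρ).trace.re) / ((P x).trace.re))

/-- `κ(P) = min_x Tr[u P_x]`. -/
def kappa {d : ℕ} {X : Type*} [Fintype X] [Nonempty X]
    (P : X → Matrix (Fin d) (Fin d) ℂ) : ℝ :=
  ⨅ x, ((mmix d * P x).trace.re)

/-- Frobenius (Hilbert–Schmidt) norm `‖A‖₂ = √(Tr[A† A])`. -/
def frob {d : ℕ} (A : Matrix (Fin d) (Fin d) ℂ) : ℝ := Real.sqrt ((Aᴴ * A).trace.re)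

/-! A state is macroscopic exactly when every `P x` is an eigen-operator of it,
`P x * m = λ • P x` with `λ` real. If `m = ∑ a_x P_x` with `a_x = Tr[P_x m] / V_x`, then
`∑_x Tr[(m - a_x) P_x (m - a_x)] = Tr[m²] - ∑_x a_x² V_x = 0`, and positivity forces
`P_x (m - a_x) = 0`. Grouping the `P_x` by the value of `a_x` yields the spectral projections
of `m`, orthogonal since they belong to distinct eigenvalues.

Conversely, for a projection `Q = ∑_x p_x P_x` with `0 ≤ p_x ≤ 1`, the vanishing sum
`(1 - Q) Q (1 - Q) = ∑_x p_x (1 - Q) P_x (1 - Q)` of positive terms gives `P_x Q = P_x` when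
`p_x ≠ 0`; the same with `1 - Q` gives `P_x Q = 0` when `p_x ≠ 1`. So `P_x Q = p_x P_x`, and
`P_x m = (∑_y c_y p(y|x)) P_x`. -/

theorem Function.exists_surjective_fin_comp_injective {α β : Type*} [Fintype α] (f : α → β) :
    ∃ (k : ℕ) (g : α → Fin k) (c : Fin k → β),
      Function.Surjective g ∧ Function.Injective c ∧ ∀ x, c (g x) = f x := by
  classical
  let e := Fintype.equivFin (Set.range f)
  exact ⟨_, e ∘ Set.rangeFactorization f, Subtype.val ∘ e.symm,
    e.surjective.comp Set.rangeFactorization_surjective,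
    Subtype.val_injective.comp e.symm.injective, fun x => by simp [Set.rangeFactorization]⟩

section EigenRelations

variable {K A ι : Type*} [Field K] [Ring A] [Algebra K A]

theorem eq_sum_smul_of_mul_eq_smul [Fintype ι] {Q : ι → A} (hQ : ∑ i, Q i = 1) {m : A}
    {c : ι → K} (h : ∀ i, Q i * m = c i • Q i) : m = ∑ i, c i • Q i := by
  rw [← one_mul m, ← hQ, sum_mul]
  exact sum_congr rfl fun i _ => h i

theorem pairwise_mul_eq_zero_of_mul_eq_smul {Q : ι → A} {c : ι → K} (hc : Function.Injective c)
    {m : A} (hQm : ∀ i, Q i * m = c i • Q i) (hmQ : ∀ i, m * Q i = c i • Q i) :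
    Pairwise (Q · * Q · = 0) := by
  intro i j hij
  have h : (c i - c j) • (Q i * Q j) = 0 := by
    rw [sub_smul, ← smul_mul_assoc, ← mul_smul_comm, ← hQm, ← hmQ, mul_assoc, sub_self]
  exact (smul_eq_zero.1 h).resolve_left (sub_ne_zero.2 (hc.ne hij))

theorem exists_completeOrthogonalIdempotents_of_mul_eq_smul {X : Type*} [Fintype X]
    {P : X → A} (hP : ∑ x, P x = 1) {m : A} {a : X → K} (hPm : ∀ x, P x * m = a x • P x)
    (hmP : ∀ x, m * P x = a x • P x) :
    ∃ (k : ℕ) (g : X → Fin k) (c : Fin k → K), Function.Surjective g ∧ (∀ x, c (g x) = a x) ∧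
      CompleteOrthogonalIdempotents (fun y => ∑ x with g x = y, P x) ∧
      m = ∑ y, c y • ∑ x with g x = y, P x := by
  obtain ⟨k, g, c, hg, hc, hcg⟩ := a.exists_surjective_fin_comp_injective
  have hQ : ∑ y, ∑ x with g x = y, P x = 1 := by rw [sum_fiberwise]; exact hP
  have hQm : ∀ y, (∑ x with g x = y, P x) * m = c y • ∑ x with g x = y, P x := fun y => by
    rw [sum_mul, smul_sum]
    exact sum_congr rfl fun x hx => by rw [hPm, ← hcg, (mem_filter.1 hx).2]
  have hmQ : ∀ y, m * (∑ x with g x = y, P x) = c y • ∑ x with g x = y, P x := fun y => by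
    rw [mul_sum, smul_sum]
    exact sum_congr rfl fun x hx => by rw [hmP, ← hcg, (mem_filter.1 hx).2]
  exact ⟨k, g, c, hg, hcg, CompleteOrthogonalIdempotents.iff_ortho_complete.2
    ⟨pairwise_mul_eq_zero_of_mul_eq_smul hc hQm hmQ, hQ⟩, eq_sum_smul_of_mul_eq_smul hQ hQm⟩

end EigenRelations

namespace Matrix

variable {𝕜 m n : Type*} [RCLike 𝕜] [Fintype n]

open scoped MatrixOrder in
theorem PosSemidef.mul_eq_zero_of_trace_conjTranspose_mul_mul_eq_zero [Fintype m]
    {A : Matrix n n 𝕜} (hA : A.PosSemidef) {B : Matrix n m 𝕜} (h : (Bᴴ * A * B).trace = 0) :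
    A * B = 0 := by
  classical
  obtain ⟨S, rfl⟩ := CStarAlgebra.nonneg_iff_eq_star_mul_self.mp hA.nonneg
  have hSB : S * B = 0 := by
    rw [← trace_conjTranspose_mul_self_eq_zero_iff, conjTranspose_mul, ← h]
    simp only [star_eq_conjTranspose, Matrix.mul_assoc]
  rw [Matrix.mul_assoc, hSB, Matrix.mul_zero]

open scoped MatrixOrder in
theorem PosSemidef.trace_mul_nonneg {A B : Matrix n n 𝕜} (hA : A.PosSemidef)
    (hB : B.PosSemidef) : 0 ≤ (A * B).trace := by
  classical
  obtain ⟨S, rfl⟩ := CStarAlgebra.nonneg_iff_eq_star_mul_self.mp hB.nonneg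
  rw [star_eq_conjTranspose, ← mul_assoc, trace_mul_comm, ← mul_assoc]
  exact (hA.mul_mul_conjTranspose_same S).trace_nonneg

variable [DecidableEq n] {X : Type*} [Fintype X]

theorem mul_eq_self_of_isIdempotentElem_eq_sum_smul {P : X → Matrix n n 𝕜}
    (hP : ∀ x, (P x).PosSemidef) {R : Matrix n n 𝕜} (hRR : IsIdempotentElem R) {w : X → ℝ}
    (hw : ∀ x, 0 ≤ w x) (hRw : R = ∑ x, w x • P x) {x : X} (hx : w x ≠ 0) : P x * R = P x := by
  have hsandwich (B : Matrix n n 𝕜) :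
      (Bᴴ * R * B).trace = ∑ x', w x' • (Bᴴ * P x' * B).trace := by
    simp [hRw, mul_sum, sum_mul, trace_sum, trace_smul]
  have hsum : ∑ x', w x' • ((1 - R)ᴴ * P x' * (1 - R)).trace = 0 := by
    rw [← hsandwich, mul_sub, mul_one, mul_assoc, hRR.eq, sub_self, trace_zero]
  have hterm := (sum_eq_zero_iff_of_nonneg fun x' _ => smul_nonneg (hw x')
    ((hP x').conjTranspose_mul_mul_same (1 - R)).trace_nonneg).1 hsum x (mem_univ x)
  have hzero := (hP x).mul_eq_zero_of_trace_conjTranspose_mul_mul_eq_zero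
    ((smul_eq_zero.1 hterm).resolve_left hx)
  rwa [mul_sub, mul_one, sub_eq_zero, eq_comm] at hzero

theorem mul_eq_smul_of_isIdempotentElem_eq_sum_smul {P : X → Matrix n n 𝕜}
    (hP : ∀ x, (P x).PosSemidef) (hPsum : ∑ x, P x = 1) {R : Matrix n n 𝕜}
    (hRR : IsIdempotentElem R) {w : X → ℝ} (hw₀ : ∀ x, 0 ≤ w x) (hw₁ : ∀ x, w x ≤ 1) (hRw : R = ∑ x, w x • P x) (x : X) :
    P x * R = w x • P x := by
  have hRw' : 1 - R = ∑ x, (1 - w x) • P x := by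
    simp only [hRw, sub_smul, one_smul, sum_sub_distrib, hPsum]
  have hmul : w x ≠ 0 → P x * R = P x :=
    mul_eq_self_of_isIdempotentElem_eq_sum_smul hP hRR hw₀ hRw
  have hmul' : w x ≠ 1 → P x * R = 0 := fun h => by
    have := mul_eq_self_of_isIdempotentElem_eq_sum_smul hP hRR.one_sub
      (fun x => sub_nonneg.2 (hw₁ x)) hRw' (sub_ne_zero.2 h.symm)
    rwa [mul_sub, mul_one, sub_eq_self] at this
  by_cases h₀ : w x = 0
  · rw [hmul' (by simp [h₀]), h₀, zero_smul]
  by_cases h₁ : w x = 1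
  · rw [hmul h₀, h₁, one_smul]
  · rw [← hmul h₀, hmul' h₁, zero_mul, smul_zero]

theorem mul_eq_smul_of_eq_sum_smul_of_re_trace_mul {P : X → Matrix n n 𝕜}
    (hP : ∀ x, (P x).PosSemidef) (hPsum : ∑ x, P x = 1) {M : Matrix n n 𝕜} (hM : M.IsHermitian)
    {a : X → ℝ} (hMa : M = ∑ x, a x • P x)
    (htr : ∀ x, RCLike.re (P x * M).trace = a x * RCLike.re (P x).trace) (x : X) :
    P x * M = a x • P x := by
  set B : X → Matrix n n 𝕜 := fun x => M - a x • 1 with hB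
  have hBherm : ∀ x, (B x).IsHermitian := fun x => hM.sub (isHermitian_one.smul rfl)
  have hterm : ∀ x, RCLike.re ((B x)ᴴ * P x * B x).trace
      = RCLike.re (P x * (M * M)).trace - a x ^ 2 * RCLike.re (P x).trace := by
    intro x
    rw [(hBherm x).eq]
    simp only [hB, sub_mul, mul_sub, smul_mul, Matrix.mul_smul, one_mul, mul_one, trace_sub,
      trace_smul, map_sub, RCLike.smul_re]
    rw [trace_mul_comm (M * P x), ← mul_assoc, trace_mul_comm (M * M), trace_mul_comm M, htr]
    ring
  have hsum : ∑ x, RCLike.re ((B x)ᴴ * P x * B x).trace = 0 := by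
    simp_rw [hterm, sum_sub_distrib, ← map_sum, ← trace_sum, ← sum_mul, hPsum, one_mul]
    nth_rewrite 1 [hMa]
    simp only [sum_mul, trace_sum, map_sum, smul_mul, trace_smul, RCLike.smul_re, htr]
    simp only [sq, mul_assoc, sub_self]
  have hnonneg : ∀ x, 0 ≤ ((B x)ᴴ * P x * B x).trace :=
    fun x => ((hP x).conjTranspose_mul_mul_same (B x)).trace_nonneg
  have hre := (sum_eq_zero_iff_of_nonneg fun x _ => (RCLike.nonneg_iff.1 (hnonneg x)).1).1 hsum x
    (mem_univ x)
  have htr0 : ((B x)ᴴ * P x * B x).trace = 0 :=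
    RCLike.ext (by simpa using hre) (by simpa using (RCLike.nonneg_iff.1 (hnonneg x)).2)
  have hPB := (hP x).mul_eq_zero_of_trace_conjTranspose_mul_mul_eq_zero htr0
  rwa [hB, mul_sub, sub_eq_zero, Matrix.mul_smul, mul_one] at hPB

theorem eq_sum_re_trace_mul_div_smul_of_mul_eq_smul {P : X → Matrix n n 𝕜}
    (hPsum : ∑ x, P x = 1) (hV : ∀ x, RCLike.re (P x).trace ≠ 0) {M : Matrix n n 𝕜}
    (h : ∀ x, ∃ r : ℝ, P x * M = r • P x) :
    M = ∑ x, (RCLike.re (P x * M).trace / RCLike.re (P x).trace) • P x := by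
  choose r hr using h
  refine eq_sum_smul_of_mul_eq_smul hPsum fun x => ?_
  rw [hr, trace_smul, RCLike.smul_re, mul_div_cancel_right₀ _ (hV x)]

end Matrix

theorem macroscopic_iff_pvm_combination_general {d : ℕ} {X : Type} [Fintype X]
    (P : X → Matrix (Fin d) (Fin d) ℂ)
    (hPpos : ∀ x, (P x).PosSemidef) (hPsum : ∑ x, P x = 1)
    (hV : ∀ x, 0 < (P x).trace.re)
    (m : Matrix (Fin d) (Fin d) ℂ) (hm : m.PosSemidef) :
    (m = ∑ x, (((P x * m).trace.re) / ((P x).trace.re)) • P x) ↔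
      ∃ (n : ℕ) (Q : Fin n → Matrix (Fin d) (Fin d) ℂ) (c : Fin n → ℝ),
        (∀ y, (Q y).PosSemidef) ∧ (∑ y, Q y = 1) ∧
        (∀ y y', Q y * Q y' = if y = y' then Q y else 0) ∧
        (∃ p : X → Fin n → ℝ, (∀ x y, 0 ≤ p x y) ∧ (∀ x, ∑ y, p x y = 1) ∧
          ∀ y, Q y = ∑ x, p x y • P x) ∧
        (∀ y, 0 ≤ c y) ∧ (m = ∑ y, c y • Q y) := by
  have hV' : ∀ x, (P x).trace.re ≠ 0 := fun x => (hV x).ne'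
  constructor
  · intro hmac
    set a : X → ℝ := fun x => (P x * m).trace.re / (P x).trace.re
    have hPm : ∀ x, P x * m = a x • P x :=
      mul_eq_smul_of_eq_sum_smul_of_re_trace_mul hPpos hPsum hm.1 hmac
        fun x => (div_mul_cancel₀ _ (hV' x)).symm
    have hmP : ∀ x, m * P x = a x • P x := fun x => by
      simpa [hm.1.eq, (hPpos x).1.eq] using congrArg conjTranspose (hPm x)
    obtain ⟨k, g, c, hg, hcg, hQ, hmQ⟩ :=
      exists_completeOrthogonalIdempotents_of_mul_eq_smul hPsum hPm hmP
    refine ⟨k, _, c, fun y => posSemidef_sum _ fun x _ => hPpos x, hQ.complete, hQ.mul_eq,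
      ⟨fun x y => if g x = y then 1 else 0, fun x y => by positivity, fun x => by simp,
        fun y => by simp [sum_filter, ite_smul]⟩, fun y => ?_, hmQ⟩
    obtain ⟨x, rfl⟩ := hg y
    rw [hcg]
    exact div_nonneg (Complex.nonneg_iff.1 ((hPpos x).trace_mul_nonneg hm)).1 (hV x).le
  · rintro ⟨k, Q, c, -, -, hQ, ⟨p, hp₀, hp₁, hpQ⟩, -, rfl⟩
    have hPQ : ∀ x y, P x * Q y = p x y • P x := fun x y =>
      mul_eq_smul_of_isIdempotentElem_eq_sum_smul hPpos hPsum
        ((OrthogonalIdempotents.iff_mul_eq.2 hQ).idem y) (hp₀ · y)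
        (fun x => hp₁ x ▸ single_le_sum (fun y _ => hp₀ x y) (mem_univ y)) (hpQ y) x
    refine eq_sum_re_trace_mul_div_smul_of_mul_eq_smul hPsum hV' fun x => ⟨∑ y, c y * p x y, ?_⟩
    simp [mul_sum, hPQ, smul_smul, sum_smul]

/-- **Theorem 1 (Characterization of macroscopic states).** A density matrix `m` is
macroscopic for the POVM `P`, i.e. `m = ∑_x Tr[P_x m] P_x / V_x`, iff there is a PVM
`Q ⪯ P` and nonnegative coefficients `c_y` with `m = ∑_y c_y Q_y`. -/
theorem macroscopic_iff_pvm_combination {d : ℕ} (hd : 0 < d) {X : Type} [Fintype X]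
    (P : X → Matrix (Fin d) (Fin d) ℂ)
    (hPpos : ∀ x, (P x).PosSemidef) (hPsum : ∑ x, P x = 1)
    (hV : ∀ x, 0 < (P x).trace.re)
    (m : Matrix (Fin d) (Fin d) ℂ) (hm : m.PosSemidef) (hm1 : m.trace = 1) :
    (m = ∑ x, (((P x * m).trace.re) / ((P x).trace.re)) • P x) ↔
      ∃ (n : ℕ) (Q : Fin n → Matrix (Fin d) (Fin d) ℂ) (c : Fin n → ℝ),
        (∀ y, (Q y).PosSemidef) ∧ (∑ y, Q y = 1) ∧
        (∀ y y', Q y * Q y' = if y = y' then Q y else 0) ∧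
        (∃ p : X → Fin n → ℝ, (∀ x y, 0 ≤ p x y) ∧ (∀ x, ∑ y, p x y = 1) ∧
          ∀ y, Q y = ∑ x, p x y • P x) ∧
        (∀ y, 0 ≤ c y) ∧ (m = ∑ y, c y • Q y) :=
  macroscopic_iff_pvm_combination_general P hPpos hPsum hV m hm
end
end

section
/- Necessary commutation condition for macroscopic states: Let P = {P_x}_{x∈X} be a POVM on ℂ^d with all volume terms V_x = Tr[P_x] strictly positive. If a density matrix m is macroscopic for P, i.e. m = Σ_x Tr[P_x m] P_x / V_x, then m commutes with every POVM element: m P_x = P_x m for all x ∈ X. -/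
open MeasureTheory Matrix Finset Filter
open scoped ComplexOrder

noncomputable section

/-!
With `c x = Tr[P x m] / Tr[P x]` we have `m = ∑ c x • P x`, and the nonnegative numbers
`Tr[(m - c x) P x (m - c x)] = Tr[P x m²] - c x Tr[P x m]` sum to
`Tr[m²] - Tr[(∑ c x • P x) m] = 0`. So each vanishes, which for positive `P x` forces
`P x m = c x P x`; taking adjoints gives `m P x = c x P x` as well.
-/

namespace Matrix

variable {n : Type*} [Fintype n]

lemma IsHermitian.ofReal_re_trace {A : Matrix n n ℂ} (hA : A.IsHermitian) :
    ((A.trace.re : ℝ) : ℂ) = A.trace := by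
  rw [← Complex.conj_eq_iff_re]
  change star _ = _
  rw [← trace_conjTranspose, hA.eq]

lemma IsHermitian.ofReal_re_trace_mul {A B : Matrix n n ℂ} (hA : A.IsHermitian)
    (hB : B.IsHermitian) : (((A * B).trace.re : ℝ) : ℂ) = (A * B).trace := by
  rw [← Complex.conj_eq_iff_re]
  change star _ = _
  rw [← trace_conjTranspose, conjTranspose_mul, hA.eq, hB.eq, trace_mul_comm]

variable {𝕜 : Type*} [RCLike 𝕜]

open scoped MatrixOrder in
lemma PosSemidef.trace_conjTranspose_mul_mul_same_eq_zero_iff {A : Matrix n n 𝕜}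
    (hA : A.PosSemidef) (B : Matrix n n 𝕜) : (Bᴴ * A * B).trace = 0 ↔ A * B = 0 := by
  refine ⟨fun h ↦ ?_, fun h ↦ by rw [Matrix.mul_assoc, h, Matrix.mul_zero, trace_zero]⟩
  classical
  obtain ⟨C, rfl⟩ := CStarAlgebra.nonneg_iff_eq_star_mul_self.mp hA.nonneg
  rw [star_eq_conjTranspose, ← Matrix.mul_assoc, ← conjTranspose_mul, Matrix.mul_assoc,
    trace_conjTranspose_mul_self_eq_zero_iff] at h
  rw [Matrix.mul_assoc, h, Matrix.mul_zero]

lemma IsHermitian.commute_of_mul_eq_smul {A B : Matrix n n 𝕜} (hA : A.IsHermitian)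
    (hB : B.IsHermitian) {c : ℝ} (h : A * B = (c : 𝕜) • A) : Commute B A := by
  have hBA : B * A = (c : 𝕜) • A := by
    simpa [conjTranspose_mul, hA.eq, hB.eq] using congr_arg (·ᴴ) h
  rw [Commute, SemiconjBy, hBA, h]

variable [DecidableEq n] {X : Type*} [Fintype X]

lemma trace_conjTranspose_mul_mul_same_sub_smul_one {P m : Matrix n n 𝕜} (hm : m.IsHermitian)
    {c : ℝ} (hc : (c : 𝕜) * P.trace = (P * m).trace) :
    ((m - (c : 𝕜) • 1)ᴴ * P * (m - (c : 𝕜) • 1)).trace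
      = (P * (m * m)).trace - c * (P * m).trace := by
  have hA : (m - (c : 𝕜) • 1)ᴴ = m - (c : 𝕜) • 1 := by
    simp [conjTranspose_sub, hm.eq]
  rw [hA, trace_mul_cycle, ← Matrix.mul_assoc]
  simp only [Matrix.sub_mul, Matrix.mul_sub, Matrix.smul_mul, Matrix.mul_smul, Matrix.one_mul,
    Matrix.mul_one, trace_sub, trace_smul, smul_eq_mul]
  rw [trace_mul_cycle, trace_mul_comm m, ← hc, Matrix.mul_assoc]
  ring

theorem mul_eq_smul_of_eq_sum_smul {P : X → Matrix n n 𝕜} (hP : ∀ x, (P x).PosSemidef)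
    (hsum : ∑ x, P x = 1) {m : Matrix n n 𝕜} (hm : m.IsHermitian) {c : X → ℝ}
    (hc : ∀ x, (c x : 𝕜) * (P x).trace = (P x * m).trace) (hmc : m = ∑ x, c x • P x)
    (x : X) : P x * m = (c x : 𝕜) • P x := by
  set A : X → Matrix n n 𝕜 := fun x ↦ m - (c x : 𝕜) • 1
  have hnonneg : ∀ y, 0 ≤ ((A y)ᴴ * P y * A y).trace := fun y ↦
    ((hP y).conjTranspose_mul_mul_same (A y)).trace_nonneg
  have htotal : ∑ y, ((A y)ᴴ * P y * A y).trace = 0 := by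
    have hmm : ∑ y, (c y : 𝕜) * (P y * m).trace = (m * m).trace := by
      nth_rw 2 [hmc]
      simp [Finset.sum_mul, trace_sum, trace_smul, RCLike.real_smul_eq_coe_mul]
    simp only [A, trace_conjTranspose_mul_mul_same_sub_smul_one hm (hc _),
      Finset.sum_sub_distrib, hmm, ← trace_sum, ← Finset.sum_mul, hsum, Matrix.one_mul,
      sub_self]
  have hx := (Finset.sum_eq_zero_iff_of_nonneg fun y _ ↦ hnonneg y).mp htotal x
    (Finset.mem_univ x)
  rwa [(hP x).trace_conjTranspose_mul_mul_same_eq_zero_iff, Matrix.mul_sub, Matrix.mul_smul,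
    Matrix.mul_one, sub_eq_zero] at hx

end Matrix

theorem macroscopic_commutes_general {d : ℕ} {X : Type} [Fintype X]
    (P : X → Matrix (Fin d) (Fin d) ℂ)
    (hPpos : ∀ x, (P x).PosSemidef) (hPsum : ∑ x, P x = 1)
    (hV : ∀ x, 0 < (P x).trace.re)
    (m : Matrix (Fin d) (Fin d) ℂ) (hm : m.PosSemidef)
    (hmacro : m = ∑ x, (((P x * m).trace.re) / ((P x).trace.re)) • P x) :
    ∀ x, m * P x = P x * m := by
  have hc : ∀ x, (((P x * m).trace.re / (P x).trace.re : ℝ) : ℂ) * (P x).trace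
      = (P x * m).trace := fun x ↦ by
    have hPx := (hPpos x).isHermitian
    rw [Complex.ofReal_div, hPx.ofReal_re_trace_mul hm.isHermitian, hPx.ofReal_re_trace,
      div_mul_cancel₀ _ fun h ↦ (hV x).ne' (by rw [h, Complex.zero_re])]
  intro x
  exact ((hPpos x).isHermitian.commute_of_mul_eq_smul hm.isHermitian
    (mul_eq_smul_of_eq_sum_smul hPpos hPsum hm.isHermitian hc hmacro x)).eq

/-- **Necessary commutation condition for macroscopic states.** If a density matrix `m`
is macroscopic for the POVM `P`, then `m` commutes with every POVM element. -/
theorem macroscopic_commutes {d : ℕ} (hd : 0 < d) {X : Type} [Fintype X]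
    (P : X → Matrix (Fin d) (Fin d) ℂ)
    (hPpos : ∀ x, (P x).PosSemidef) (hPsum : ∑ x, P x = 1)
    (hV : ∀ x, 0 < (P x).trace.re)
    (m : Matrix (Fin d) (Fin d) ℂ) (hm : m.PosSemidef) (hm1 : m.trace = 1)
    (hmacro : m = ∑ x, (((P x * m).trace.re) / ((P x).trace.re)) • P x) :
    ∀ x, m * P x = P x * m :=
  macroscopic_commutes_general P hPpos hPsum hV m hm hmacro
end
end

section
/- Deterministic post-processing to a PVM (Lemma 1): Suppose Q = {Q_y}_{y∈Y} is a PVM on ℂ^d (mutually orthogonal projections with Q_y Q_{y'} = δ_{yy'} Q_y and Σ_y Q_y = I), P = {P_x}_{x∈X} is a POVM on ℂ^d with all P_x ≠ 0, and Q ⪯ P via a conditional probability distribution p(y|x), i.e. Q_y = Σ_x p(y|x) P_x for all y. Then the post-processing is deterministic: p(y|x) ∈ {0, 1} for all x ∈ X and y ∈ Y. -/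
open MeasureTheory Matrix Finset Filter
open scoped ComplexOrder

noncomputable section

/-!
Fix `x` and `y` and write `t = p(y|x)`. Since all `P_x' ≥ 0`, dropping all terms but one from
`Q_y = ∑ p(y|x') P_x'` and from `1 - Q_y = ∑ (1 - p(y|x')) P_x'` gives
`t P_x ≤ Q_y` and `(1 - t) P_x ≤ 1 - Q_y`. A positive matrix dominated by `B` vanishes on the
kernel of `B`; as `Q_y` is a projection, `t P_x` vanishes on the range of `1 - Q_y` and
`(1 - t) P_x` on the range of `Q_y`. Hence `t (1 - t) P_x = 0`, and `P_x ≠ 0` forces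
`t ∈ {0, 1}`.
-/

open scoped MatrixOrder

namespace Matrix.PosSemidef

variable {n m 𝕜 : Type*} [Fintype n] [RCLike 𝕜]

theorem mulVec_eq_zero_of_le {A B : Matrix n n 𝕜} (hA : A.PosSemidef) (hAB : A ≤ B)
    {v : n → 𝕜} (hBv : B *ᵥ v = 0) : A *ᵥ v = 0 := by
  rw [← hA.dotProduct_mulVec_zero_iff]
  refine le_antisymm ?_ (hA.dotProduct_mulVec_nonneg v)
  have h := (le_iff.mp hAB).dotProduct_mulVec_nonneg v
  rwa [sub_mulVec, hBv, zero_sub, dotProduct_neg, neg_nonneg] at h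

theorem mul_eq_zero_of_le {A B : Matrix n n 𝕜} {C : Matrix n m 𝕜} (hA : A.PosSemidef)
    (hAB : A ≤ B) (hBC : B * C = 0) : A * C = 0 := by
  ext i j
  have hBCj : B *ᵥ Cᵀ j = 0 := funext fun k => congrFun₂ hBC k j
  exact congrFun (hA.mulVec_eq_zero_of_le hAB hBCj) i

theorem smul_eq_zero_of_smul_le_of_one_sub_smul_le [DecidableEq n] {P E : Matrix n n 𝕜}
    {t : ℝ} (hP : P.PosSemidef) (hE : IsIdempotentElem E) (ht₀ : 0 ≤ t) (ht₁ : t ≤ 1)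
    (h₁ : t • P ≤ E) (h₂ : (1 - t) • P ≤ 1 - E) : (t * (1 - t)) • P = 0 := by
  have hA : t • P * (1 - E) = 0 := (hP.smul ht₀).mul_eq_zero_of_le h₁ hE.mul_one_sub_self
  have hB : (1 - t) • P * E = 0 :=
    (hP.smul (sub_nonneg.mpr ht₁)).mul_eq_zero_of_le h₂ hE.one_sub_mul_self
  calc (t * (1 - t)) • P = (1 - t) • (t • P * E + t • P * (1 - E)) := by
        rw [← mul_add, add_sub_cancel, mul_one, smul_smul, mul_comm]
    _ = t • ((1 - t) • P * E) := by
        rw [hA, add_zero, smul_mul_assoc, smul_mul_assoc, smul_smul, smul_smul, mul_comm]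
    _ = 0 := by rw [hB, smul_zero]

end Matrix.PosSemidef

theorem Matrix.smul_le_sum_smul {n ι 𝕜 : Type*} [Fintype ι] [RCLike 𝕜]
    {P : ι → Matrix n n 𝕜} (hP : ∀ i, (P i).PosSemidef) {c : ι → ℝ} (hc : ∀ i, 0 ≤ c i)
    (i : ι) : c i • P i ≤ ∑ j, c j • P j :=
  Finset.single_le_sum (fun j _ => ((hP j).smul (hc j)).nonneg) (Finset.mem_univ i)

theorem one_sub_sum_smul_of_sum_eq_one {ι R A : Type*} [Fintype ι] [Ring R] [Ring A]
    [Module R A] {P : ι → A} (hP : ∑ i, P i = 1) (c : ι → R) :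
    1 - ∑ i, c i • P i = ∑ i, (1 - c i) • P i := by
  simp only [sub_smul, one_smul, Finset.sum_sub_distrib, hP]

theorem pvm_postprocessing_deterministic_general {d : ℕ}
    {X Y : Type} [Fintype X] [Fintype Y] [DecidableEq Y]
    (P : X → Matrix (Fin d) (Fin d) ℂ)
    (hPpos : ∀ x, (P x).PosSemidef) (hPsum : ∑ x, P x = 1)
    (hPne : ∀ x, P x ≠ 0)
    (Q : Y → Matrix (Fin d) (Fin d) ℂ)
    (hQproj : ∀ y y', Q y * Q y' = if y = y' then Q y else 0)
    (p : X → Y → ℝ) (hp0 : ∀ x y, 0 ≤ p x y) (hp1 : ∀ x, ∑ y, p x y = 1)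
    (hQP : ∀ y, Q y = ∑ x, p x y • P x) :
    ∀ x y, p x y = 0 ∨ p x y = 1 := by
  intro x y
  have hp_le_one (x' : X) : p x' y ≤ 1 :=
    hp1 x' ▸ Finset.single_le_sum (fun y' _ => hp0 x' y') (Finset.mem_univ y)
  have hQ_idem : IsIdempotentElem (Q y) := (hQproj y y).trans (if_pos rfl)
  have h₁ : p x y • P x ≤ Q y := hQP y ▸ smul_le_sum_smul hPpos (hp0 · y) x
  have h₂ : (1 - p x y) • P x ≤ 1 - Q y := by
    rw [hQP y, one_sub_sum_smul_of_sum_eq_one hPsum]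
    exact smul_le_sum_smul hPpos (fun x' => sub_nonneg.mpr (hp_le_one x')) x
  have hdeg := (hPpos x).smul_eq_zero_of_smul_le_of_one_sub_smul_le hQ_idem (hp0 x y)
    (hp_le_one x) h₁ h₂
  rcases mul_eq_zero.mp ((smul_eq_zero.mp hdeg).resolve_right (hPne x)) with h | h
  · exact Or.inl h
  · exact Or.inr (sub_eq_zero.mp h).symm

/-- **Lemma 1 (Deterministic post-processing to a PVM).** If a PVM `Q` is a
post-processing of a POVM `P` with all `P_x ≠ 0`, via a conditional probability
distribution `p(y|x)`, then `p(y|x) ∈ {0,1}` for all `x, y`. -/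
theorem pvm_postprocessing_deterministic {d : ℕ} (hd : 0 < d)
    {X Y : Type} [Fintype X] [Fintype Y] [DecidableEq Y]
    (P : X → Matrix (Fin d) (Fin d) ℂ)
    (hPpos : ∀ x, (P x).PosSemidef) (hPsum : ∑ x, P x = 1)
    (hPne : ∀ x, P x ≠ 0)
    (Q : Y → Matrix (Fin d) (Fin d) ℂ)
    (hQpos : ∀ y, (Q y).PosSemidef) (hQsum : ∑ y, Q y = 1)
    (hQproj : ∀ y y', Q y * Q y' = if y = y' then Q y else 0)
    (p : X → Y → ℝ) (hp0 : ∀ x y, 0 ≤ p x y) (hp1 : ∀ x, ∑ y, p x y = 1)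
    (hQP : ∀ y, Q y = ∑ x, p x y • P x) :
    ∀ x y, p x y = 0 ∨ p x y = 1 :=
  pvm_postprocessing_deterministic_general P hPpos hPsum hPne Q hQproj p hp0 hp1 hQP
end
end

section
/- Reduction from pointwise concentration to observational-entropy concentration (Lemma 2): Let ρ be a density matrix on ℂ^d (d ≥ 2), P = {P_x}_{x∈X} a POVM on ℂ^d with finite outcome set X and all volume terms V_x = Tr[P_x] strictly positive, ν a Borel probability measure on the unitary group U(d), and g : ℝ → ℝ a non-increasing function such that for all x ∈ X and all ξ > 0, ν{U : |Tr[U ρ U† P_x] − Tr[u P_x]| ≥ ξ} ≤ g(ξ). Then for every δ > 0, ν{U : S_P(U ρ U†) ≤ (1 − δ) log d} ≤ (1/κ(P)) · g(κ(P) √(δ log d)), where κ(P) = min_x Tr[u P_x]. -/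
/-!
Write `p x = Tr[P_x σ]` and `q x = Tr[u P_x] = V_x / d`, both probability vectors on `X`. Then
`S_P(σ) = log d - D(p ‖ q)`, and `D(p ‖ q) ≤ χ²(p ‖ q) = ∑ (p x - q x)² / q x` by `log t ≤ t - 1`.
If every deviation satisfies `|p x - q x| < κ ε`, each χ² term is below `κ ε²`, and since
`|X| κ ≤ ∑ q x = 1` the sum is below `ε²`. With `ε = √(δ log d)` this shows that the event
`S_P(UρU†) ≤ (1 - δ) log d` lies in the union of the `|X| ≤ 1/κ` deviation events at level
`κ ε`, and the union bound concludes.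
-/

open MeasureTheory Matrix Finset Filter
open scoped ComplexOrder

noncomputable section

lemma Real.mul_log_div_le {p q : ℝ} (hp : 0 ≤ p) (hq : 0 < q) :
    p * Real.log (p / q) ≤ (p - q) ^ 2 / q + (p - q) := by
  rcases hp.eq_or_lt with rfl | hp
  · simp [sq, hq.ne']
  calc p * Real.log (p / q) ≤ p * (p / q - 1) :=
        mul_le_mul_of_nonneg_left (Real.log_le_sub_one_of_pos (by positivity)) hp.le
    _ = (p - q) ^ 2 / q + (p - q) := by field_simp; ring

lemma sum_mul_log_div_le_sum_sq_div {ι : Type*} [Fintype ι] {p q : ι → ℝ}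
    (hp : ∀ i, 0 ≤ p i) (hq : ∀ i, 0 < q i) (hsum : ∑ i, p i = ∑ i, q i) :
    ∑ i, p i * Real.log (p i / q i) ≤ ∑ i, (p i - q i) ^ 2 / q i := by
  calc ∑ i, p i * Real.log (p i / q i) ≤ ∑ i, ((p i - q i) ^ 2 / q i + (p i - q i)) :=
        sum_le_sum fun i _ => Real.mul_log_div_le (hp i) (hq i)
    _ = ∑ i, (p i - q i) ^ 2 / q i := by
        rw [sum_add_distrib, sum_sub_distrib, hsum, sub_self, add_zero]

lemma sum_sq_div_lt_of_abs_sub_lt {ι : Type*} [Fintype ι] [Nonempty ι] {p q : ι → ℝ}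
    {k ε : ℝ} (hk : 0 < k) (hkq : ∀ i, k ≤ q i) (hcard : Fintype.card ι * k ≤ 1)
    (hpq : ∀ i, |p i - q i| < k * ε) :
    ∑ i, (p i - q i) ^ 2 / q i < ε ^ 2 := by
  have hterm : ∀ i ∈ univ, (p i - q i) ^ 2 / q i < k * ε ^ 2 := fun i _ => by
    have hsq : (p i - q i) ^ 2 < (k * ε) ^ 2 := by
      rw [← sq_abs]
      exact pow_lt_pow_left₀ (hpq i) (abs_nonneg _) two_ne_zero
    calc (p i - q i) ^ 2 / q i ≤ (p i - q i) ^ 2 / k :=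
          div_le_div_of_nonneg_left (sq_nonneg _) hk (hkq i)
      _ < (k * ε) ^ 2 / k := by gcongr
      _ = k * ε ^ 2 := by field_simp
  calc ∑ i, (p i - q i) ^ 2 / q i < ∑ _i : ι, k * ε ^ 2 := sum_lt_sum_of_nonempty univ_nonempty hterm
    _ = Fintype.card ι * k * ε ^ 2 := by simp [mul_assoc]
    _ ≤ ε ^ 2 := mul_le_of_le_one_left (sq_nonneg ε) hcard

lemma Matrix.PosSemidef.re_trace_mul_nonneg {n : Type*} [Fintype n] [DecidableEq n]
    {A B : Matrix n n ℂ} (hA : A.PosSemidef) (hB : B.PosSemidef) : 0 ≤ (A * B).trace.re := by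
  obtain ⟨C, rfl⟩ : ∃ C : Matrix n n ℂ, B = star C * C := by
    open scoped MatrixOrder Matrix.Norms.L2Operator in
    exact CStarAlgebra.nonneg_iff_eq_star_mul_self.mp hB.nonneg
  rw [← Matrix.mul_assoc, trace_mul_cycle, star_eq_conjTranspose]
  exact (Complex.nonneg_iff.mp (hA.mul_mul_conjTranspose_same C).trace_nonneg).1

lemma Matrix.trace_unitary_conj {n : Type*} [Fintype n] [DecidableEq n]
    (U : unitaryGroup n ℂ) (ρ : Matrix n n ℂ) :
    ((U : Matrix n n ℂ) * ρ * (U : Matrix n n ℂ)ᴴ).trace = ρ.trace := by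
  rw [trace_mul_cycle, ← star_eq_conjTranspose, Unitary.star_mul_self_of_mem U.2, Matrix.one_mul]

lemma sum_re_trace_mul_eq_one {d : ℕ} {X : Type*} [Fintype X] {P : X → Matrix (Fin d) (Fin d) ℂ}
    (hPsum : ∑ x, P x = 1) {σ : Matrix (Fin d) (Fin d) ℂ} (hσ : σ.trace = 1) :
    ∑ x, (P x * σ).trace.re = 1 := by
  rw [← Complex.re_sum, ← trace_sum, ← sum_mul, hPsum, Matrix.one_mul, hσ, Complex.one_re]

lemma trace_mmix {d : ℕ} (hd : d ≠ 0) : (mmix d).trace = 1 := by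
  simp [mmix, hd]

lemma re_trace_mmix_mul {d : ℕ} (A : Matrix (Fin d) (Fin d) ℂ) :
    (mmix d * A).trace.re = A.trace.re / d := by
  rw [mmix, Matrix.smul_mul, Matrix.one_mul, trace_smul, smul_eq_mul, ← Complex.ofReal_natCast,
    ← Complex.ofReal_inv, Complex.re_ofReal_mul, div_eq_inv_mul]

section POVM

variable {d : ℕ} {X : Type*} [Fintype X] {P : X → Matrix (Fin d) (Fin d) ℂ}

lemma kappa_le [Nonempty X] (P : X → Matrix (Fin d) (Fin d) ℂ) (x : X) :
    kappa P ≤ (mmix d * P x).trace.re :=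
  ciInf_le (Set.finite_range _).bddBelow x

lemma kappa_pos [Nonempty X] (hd : 0 < d) (hV : ∀ x, 0 < (P x).trace.re) : 0 < kappa P := by
  obtain ⟨x, hx⟩ := exists_eq_ciInf_of_finite (f := fun x => (mmix d * P x).trace.re)
  rw [kappa, ← hx, re_trace_mmix_mul]
  exact div_pos (hV x) (Nat.cast_pos.mpr hd)

lemma sum_re_trace_mmix_mul (hd : 0 < d) (hPsum : ∑ x, P x = 1) :
    ∑ x, (mmix d * P x).trace.re = 1 := by
  simpa only [trace_mul_comm (mmix d)] using sum_re_trace_mul_eq_one hPsum (trace_mmix hd.ne')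

lemma card_mul_kappa_le_one [Nonempty X] (hd : 0 < d) (hPsum : ∑ x, P x = 1) :
    Fintype.card X * kappa P ≤ 1 := by
  simpa [sum_re_trace_mmix_mul hd hPsum] using
    card_nsmul_le_sum univ _ _ fun x _ => kappa_le P x

lemma obsEnt_eq_log_sub (hd : 0 < d) (hV : ∀ x, 0 < (P x).trace.re)
    {σ : Matrix (Fin d) (Fin d) ℂ} (hσ : ∑ x, (P x * σ).trace.re = 1) :
    obsEnt P σ = Real.log d - ∑ x, (P x * σ).trace.re *
      Real.log ((P x * σ).trace.re / (mmix d * P x).trace.re) := by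
  have hterm : ∀ x, (P x * σ).trace.re * Real.log ((P x * σ).trace.re / (P x).trace.re) =
      (P x * σ).trace.re * Real.log ((P x * σ).trace.re / (mmix d * P x).trace.re) -
        (P x * σ).trace.re * Real.log d := fun x => by
    rcases eq_or_ne (P x * σ).trace.re 0 with hp | hp
    · simp [hp]
    have hd' : (d : ℝ) ≠ 0 := by positivity
    rw [re_trace_mmix_mul, div_div_eq_mul_div, mul_div_right_comm,
      Real.log_mul (div_ne_zero hp (hV x).ne') hd']
    ring
  rw [obsEnt, sum_congr rfl fun x _ => hterm x, sum_sub_distrib, ← sum_mul, hσ]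
  ring

lemma log_sub_sq_lt_obsEnt [Nonempty X] (hd : 0 < d) (hPpos : ∀ x, (P x).PosSemidef)
    (hPsum : ∑ x, P x = 1) (hV : ∀ x, 0 < (P x).trace.re)
    {σ : Matrix (Fin d) (Fin d) ℂ} (hσ : σ.PosSemidef) (hσ1 : σ.trace = 1) {ε : ℝ}
    (hclose : ∀ x, |(P x * σ).trace.re - (mmix d * P x).trace.re| < kappa P * ε) :
    Real.log d - ε ^ 2 < obsEnt P σ := by
  have hp := sum_re_trace_mul_eq_one hPsum hσ1
  have hq := sum_re_trace_mmix_mul hd hPsum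
  have hq_pos : ∀ x, 0 < (mmix d * P x).trace.re := fun x =>
    (kappa_pos hd hV).trans_le (kappa_le P x)
  have hrel := sum_mul_log_div_le_sum_sq_div (fun x => (hPpos x).re_trace_mul_nonneg hσ) hq_pos
    (hp.trans hq.symm)
  have hchi := sum_sq_div_lt_of_abs_sub_lt (kappa_pos hd hV) (kappa_le P)
    (card_mul_kappa_le_one hd hPsum) hclose
  rw [obsEnt_eq_log_sub hd hV hp]
  linarith

end POVM

theorem pointwise_to_obsEnt_concentration_general {d : ℕ} (hd : 2 ≤ d)
    {X : Type} [Fintype X] [Nonempty X]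
    (P : X → Matrix (Fin d) (Fin d) ℂ)
    (hPpos : ∀ x, (P x).PosSemidef) (hPsum : ∑ x, P x = 1)
    (hV : ∀ x, 0 < (P x).trace.re)
    (ρ : Matrix (Fin d) (Fin d) ℂ) (hρ : ρ.PosSemidef) (hρ1 : ρ.trace = 1)
    (ν : Measure ↥(Matrix.unitaryGroup (Fin d) ℂ)) [IsProbabilityMeasure ν]
    (g : ℝ → ℝ)
    (hconc : ∀ x : X, ∀ ξ : ℝ, 0 < ξ →
      (ν {U | ξ ≤ |((P x) * ((U : Matrix (Fin d) (Fin d) ℂ) * ρ *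
          (U : Matrix (Fin d) (Fin d) ℂ)ᴴ)).trace.re - ((mmix d) * (P x)).trace.re|}).toReal
        ≤ g ξ)
    (δ : ℝ) (hδ : 0 < δ) :
    (ν {U | obsEnt P ((U : Matrix (Fin d) (Fin d) ℂ) * ρ * (U : Matrix (Fin d) (Fin d) ℂ)ᴴ)
        ≤ (1 - δ) * Real.log d}).toReal
      ≤ (1 / kappa P) * g (kappa P * Real.sqrt (δ * Real.log d)) := by
  have hd0 : 0 < d := by omega
  have hκ := kappa_pos hd0 hV
  have hδL : 0 < δ * Real.log d := mul_pos hδ (Real.log_pos (by exact_mod_cast hd))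
  set ξ := kappa P * Real.sqrt (δ * Real.log d)
  have hξ : 0 < ξ := by positivity
  have hsub : {U : unitaryGroup (Fin d) ℂ | obsEnt P ((U : Matrix (Fin d) (Fin d) ℂ) * ρ *
      (U : Matrix (Fin d) (Fin d) ℂ)ᴴ) ≤ (1 - δ) * Real.log d} ⊆
      ⋃ x, {U | ξ ≤ |(P x * ((U : Matrix (Fin d) (Fin d) ℂ) * ρ *
        (U : Matrix (Fin d) (Fin d) ℂ)ᴴ)).trace.re - (mmix d * P x).trace.re|} := by
    intro U hU
    by_contra hfar
    simp only [Set.mem_iUnion, Set.mem_ofPred_eq, not_exists, not_le] at hfar hU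
    have := log_sub_sq_lt_obsEnt hd0 hPpos hPsum hV (hρ.mul_mul_conjTranspose_same _)
      ((trace_unitary_conj U ρ).trans hρ1) hfar
    rw [Real.sq_sqrt hδL.le] at this
    linarith
  have hcard : (Fintype.card X : ℝ) ≤ 1 / kappa P :=
    (le_div_iff₀ hκ).mpr (card_mul_kappa_le_one hd0 hPsum)
  obtain ⟨x₀⟩ := ‹Nonempty X›
  calc ν.real _ ≤ ∑ x, ν.real _ := (measureReal_mono hsub).trans (measureReal_iUnion_fintype_le _)
    _ ≤ ∑ _x : X, g ξ := sum_le_sum fun x _ => hconc x ξ hξ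
    _ = Fintype.card X * g ξ := by simp
    _ ≤ 1 / kappa P * g ξ :=
        mul_le_mul_of_nonneg_right hcard (measureReal_nonneg.trans (hconc x₀ ξ hξ))

/-- **Lemma 2 (From pointwise concentration to observational-entropy concentration).**
If for each POVM element the probability (under `ν`) that `Tr[UρU†P_x]` deviates from
`Tr[uP_x]` by at least `ξ` is bounded by a non-increasing function `g(ξ)`, then
`ν{S_P(UρU†) ≤ (1-δ) log d} ≤ g(κ(P)√(δ log d)) / κ(P)`. -/
theorem pointwise_to_obsEnt_concentration {d : ℕ} (hd : 2 ≤ d)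
    {X : Type} [Fintype X] [Nonempty X]
    (P : X → Matrix (Fin d) (Fin d) ℂ)
    (hPpos : ∀ x, (P x).PosSemidef) (hPsum : ∑ x, P x = 1)
    (hV : ∀ x, 0 < (P x).trace.re)
    (ρ : Matrix (Fin d) (Fin d) ℂ) (hρ : ρ.PosSemidef) (hρ1 : ρ.trace = 1)
    (ν : Measure ↥(Matrix.unitaryGroup (Fin d) ℂ)) [IsProbabilityMeasure ν]
    (g : ℝ → ℝ) (hg : Antitone g)
    (hconc : ∀ x : X, ∀ ξ : ℝ, 0 < ξ →
      (ν {U | ξ ≤ |((P x) * ((U : Matrix (Fin d) (Fin d) ℂ) * ρ *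
          (U : Matrix (Fin d) (Fin d) ℂ)ᴴ)).trace.re - ((mmix d) * (P x)).trace.re|}).toReal
        ≤ g ξ)
    (δ : ℝ) (hδ : 0 < δ) :
    (ν {U | obsEnt P ((U : Matrix (Fin d) (Fin d) ℂ) * ρ * (U : Matrix (Fin d) (Fin d) ℂ)ᴴ)
        ≤ (1 - δ) * Real.log d}).toReal
      ≤ (1 / kappa P) * g (kappa P * Real.sqrt (δ * Real.log d)) :=
  pointwise_to_obsEnt_concentration_general hd P hPpos hPsum hV ρ hρ hρ1 ν g hconc δ hδ
end
end

section
/- Fundamental bound of observational entropy: Let ρ be a density matrix on ℂ^d and P = {P_x}_{x∈X} a POVM on ℂ^d with all volume terms V_x = Tr[P_x] strictly positive. Then S_P(ρ) ≥ S(ρ), where S(ρ) = −Σ_i λ_i log λ_i is the von Neumann entropy of ρ, the sum being over the eigenvalues λ_i of ρ. -/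
open MeasureTheory Matrix Finset Filter
open scoped ComplexOrder

noncomputable section

/-! Diagonalize `ρ = ∑ᵢ λᵢ |uᵢ⟩⟨uᵢ|` and put `q x i = ⟨uᵢ| P x |uᵢ⟩ ≥ 0`. Then `Tr[P x ρ] = ∑ᵢ q x i λᵢ`,
`Tr[P x] = ∑ᵢ q x i` and `∑ₓ q x i = 1`, so the bound becomes a classical one: Jensen's inequality
for the convex function `t ↦ t log t`, with weights `q x i / Tr[P x]`, bounds the `x`-th term of
`S_P(ρ)` by `∑ᵢ q x i λᵢ log λᵢ`, and summing over `x` leaves `∑ᵢ λᵢ log λᵢ`. -/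

open Real

theorem mul_log_div_sum_le_sum_mul_mul_log {ι : Type*} [Fintype ι] (w t : ι → ℝ)
    (hw : ∀ i, 0 ≤ w i) (ht : ∀ i, 0 ≤ t i) (hW : 0 < ∑ i, w i) :
    (∑ i, w i * t i) * log ((∑ i, w i * t i) / ∑ i, w i) ≤ ∑ i, w i * (t i * log (t i)) := by
  have jensen := convexOn_mul_log.map_sum_le (t := univ) (w := fun i => w i / ∑ j, w j) (p := t)
    (fun i _ => div_nonneg (hw i) hW.le) (by rw [← sum_div, div_self hW.ne'])
    (fun i _ => Set.mem_Ici.mpr (ht i))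
  simp only [smul_eq_mul, div_mul_eq_mul_div, ← sum_div] at jensen
  exact (div_le_div_iff_of_pos_right hW).mp jensen

theorem sum_mul_log_div_le_of_sum_eq_one {X ι : Type*} [Fintype X] [Fintype ι]
    (q : X → ι → ℝ) (t : ι → ℝ) (hq : ∀ x i, 0 ≤ q x i) (ht : ∀ i, 0 ≤ t i)
    (hcol : ∀ i, ∑ x, q x i = 1) (hrow : ∀ x, 0 < ∑ i, q x i) :
    ∑ x, (∑ i, q x i * t i) * log ((∑ i, q x i * t i) / ∑ i, q x i) ≤ ∑ i, t i * log (t i) :=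
  calc _ ≤ ∑ x, ∑ i, q x i * (t i * log (t i)) :=
        sum_le_sum fun x _ => mul_log_div_sum_le_sum_mul_mul_log _ _ (hq x) ht (hrow x)
    _ = ∑ i, t i * log (t i) := by simp only [sum_comm (γ := X), ← sum_mul, hcol, one_mul]

namespace Matrix
variable {𝕜 n : Type*} [RCLike 𝕜] [Fintype n] [DecidableEq n]

theorem trace_star_mul_mul_of_mem_unitaryGroup {U : Matrix n n 𝕜} (hU : U ∈ unitaryGroup n 𝕜)
    (A : Matrix n n 𝕜) : (star U * A * U).trace = A.trace := by
  rw [trace_mul_cycle, (mem_unitaryGroup_iff).mp hU, one_mul]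

theorem IsHermitian.trace_mul_eq_sum_eigenvalues {ρ : Matrix n n 𝕜} (hρ : ρ.IsHermitian)
    (A : Matrix n n 𝕜) :
    (A * ρ).trace = ∑ i, (star (hρ.eigenvectorUnitary : Matrix n n 𝕜) * A *
      hρ.eigenvectorUnitary) i i * hρ.eigenvalues i := by
  conv_lhs => rw [hρ.spectral_theorem, Unitary.conjStarAlgAut_apply, ← mul_assoc, ← mul_assoc,
    trace_mul_comm, ← mul_assoc, ← mul_assoc]
  simp [trace, mul_diagonal]

end Matrix

theorem obsEnt_ge_vonNeumann_general {d : ℕ} {X : Type} [Fintype X]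
    (P : X → Matrix (Fin d) (Fin d) ℂ)
    (hPpos : ∀ x, (P x).PosSemidef) (hPsum : ∑ x, P x = 1)
    (hV : ∀ x, 0 < (P x).trace.re)
    (ρ : Matrix (Fin d) (Fin d) ℂ) (hρ : ρ.PosSemidef) :
    -∑ i, (hρ.1.eigenvalues i) * Real.log (hρ.1.eigenvalues i) ≤ obsEnt P ρ := by
  set U := hρ.1.eigenvectorUnitary
  set q : X → Fin d → ℝ := fun x i => ((star (U : Matrix (Fin d) (Fin d) ℂ) * P x * U) i i).re
  have hq_nonneg : ∀ x i, 0 ≤ q x i := fun x i =>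
    (RCLike.nonneg_iff.mp ((hPpos x).conjTranspose_mul_mul_same U.1).diag_nonneg).1
  have hq_col : ∀ i, ∑ x, q x i = 1 := fun i => by
    simp only [q, ← Complex.re_sum, ← Matrix.sum_apply, ← mul_sum, ← sum_mul, hPsum, mul_one,
      Unitary.coe_star_mul_self, one_apply_eq, Complex.one_re]
  have hV_eq : ∀ x, (P x).trace.re = ∑ i, q x i := fun x => by
    rw [← trace_star_mul_mul_of_mem_unitaryGroup U.2, trace, Complex.re_sum]; rfl
  have hp_eq : ∀ x, (P x * ρ).trace.re = ∑ i, q x i * hρ.1.eigenvalues i := fun x => by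
    rw [hρ.1.trace_mul_eq_sum_eigenvalues, Complex.re_sum]
    exact sum_congr rfl fun i _ => Complex.re_mul_ofReal _ _
  unfold obsEnt
  simp only [hV_eq, hp_eq] at hV ⊢
  exact neg_le_neg (sum_mul_log_div_le_of_sum_eq_one q _ hq_nonneg hρ.eigenvalues_nonneg hq_col hV)

/-- **Fundamental bound of observational entropy:** `S_P(ρ) ≥ S(ρ)`, where
`S(ρ) = -∑ᵢ λᵢ log λᵢ` is the von Neumann entropy (sum over eigenvalues of `ρ`). -/
theorem obsEnt_ge_vonNeumann {d : ℕ} {X : Type} [Fintype X]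
    (P : X → Matrix (Fin d) (Fin d) ℂ)
    (hPpos : ∀ x, (P x).PosSemidef) (hPsum : ∑ x, P x = 1)
    (hV : ∀ x, 0 < (P x).trace.re)
    (ρ : Matrix (Fin d) (Fin d) ℂ) (hρ : ρ.PosSemidef) (hρ1 : ρ.trace = 1) :
    -∑ i, (hρ.1.eigenvalues i) * Real.log (hρ.1.eigenvalues i) ≤ obsEnt P ρ :=
  obsEnt_ge_vonNeumann_general P hPpos hPsum hV ρ hρ
end
end

section
/- Equality condition for the fundamental bound: Let ρ be a density matrix on ℂ^d and P = {P_x}_{x∈X} a POVM on ℂ^d with all volume terms V_x = Tr[P_x] strictly positive. Then S_P(ρ) = S(ρ) if and only if ρ = Σ_x Tr[P_x ρ] P_x / V_x, where S(ρ) = −Σ_i λ_i log λ_i is the von Neumann entropy of ρ. -/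
open MeasureTheory Matrix Finset Filter
open scoped ComplexOrder

noncomputable section

/-!
In an orthonormal eigenbasis `vᵢ` of `ρ`, with eigenvalues `λᵢ`, the numbers `aₓᵢ = ⟨vᵢ, Pₓ vᵢ⟩`
are nonnegative with `∑ₓ aₓᵢ = 1`, and `Tr[Pₓ ρ] = ∑ᵢ aₓᵢ λᵢ`, `Vₓ = ∑ᵢ aₓᵢ`. With
`cₓ = Tr[Pₓ ρ] / Vₓ`, the difference `S_P(ρ) - S(ρ)` is
`∑ₓᵢ aₓᵢ (λᵢ log (λᵢ / cₓ) - λᵢ + cₓ)`, a sum of nonnegative Kullback–Leibler terms which vanishes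
iff `aₓᵢ (λᵢ - cₓ) = 0` for all `x, i`. Since `Tr[(ρ - cₓ) Pₓ (ρ - cₓ)] = ∑ᵢ aₓᵢ (λᵢ - cₓ)²`, this
condition says `Pₓ ρ = cₓ Pₓ`, and summing over `x` gives `ρ = ∑ₓ cₓ Pₓ`. Conversely, if
`ρ = ∑ₓ cₓ Pₓ` then the array `aₓᵢ (λᵢ - cₓ)` has vanishing row and column sums, hence
`∑ₓᵢ aₓᵢ (λᵢ - cₓ)² = 0`.
-/

open Real InformationTheory Unitary

section Gibbs
variable {X ι : Type*} [Fintype X] [Fintype ι]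

def weightedMean (w f : ι → ℝ) : ℝ := (∑ i, w i * f i) / ∑ i, w i

lemma weightedMean_nonneg {w f : ι → ℝ} (hw : ∀ i, 0 ≤ w i) (hf : ∀ i, 0 ≤ f i) :
    0 ≤ weightedMean w f :=
  div_nonneg (sum_nonneg fun i _ ↦ mul_nonneg (hw i) (hf i)) (sum_nonneg fun i _ ↦ hw i)

lemma weightedMean_mul_sum {w : ι → ℝ} (hw : ∀ i, 0 ≤ w i) (f : ι → ℝ) :
    weightedMean w f * ∑ i, w i = ∑ i, w i * f i := by
  rcases (sum_nonneg fun i _ ↦ hw i).eq_or_lt with h | h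
  · simp [(Fintype.sum_eq_zero_iff_of_nonneg hw).1 h.symm]
  · exact div_mul_cancel₀ _ h.ne'

def klTerm (l c : ℝ) : ℝ := l * log l - l * log c - l + c

lemma klTerm_eq_mul_klFun {l c : ℝ} (hc : 0 < c) : klTerm l c = c * klFun (l / c) := by
  rcases eq_or_ne l 0 with rfl | hl
  · simp [klTerm, klFun]
  · rw [klTerm, klFun, log_div hl hc.ne']
    field_simp
    ring

lemma mul_klTerm_nonneg_and_eq_zero_iff {a l c : ℝ} (ha : 0 ≤ a) (hl : 0 ≤ l) (hc : 0 ≤ c)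
    (hsupp : c = 0 → a * l = 0) :
    0 ≤ a * klTerm l c ∧ (a * klTerm l c = 0 ↔ a * (l - c) = 0) := by
  rcases hc.eq_or_lt with rfl | hc
  · rcases mul_eq_zero.1 (hsupp rfl) with rfl | rfl <;> simp [klTerm]
  · rw [klTerm_eq_mul_klFun hc]
    refine ⟨mul_nonneg ha (mul_nonneg hc.le (klFun_nonneg (div_nonneg hl hc.le))), ?_⟩
    simp [hc.ne', klFun_eq_zero_iff (div_nonneg hl hc.le), div_eq_one_iff_eq hc.ne', sub_eq_zero]

variable {a : X → ι → ℝ} {l : ι → ℝ} {c : X → ℝ}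

lemma sum_sum_mul_klTerm (hcol : ∀ i, ∑ x, a x i = 1)
    (hmean : ∀ x, c x * ∑ i, a x i = ∑ i, a x i * l i) :
    ∑ x, ∑ i, a x i * klTerm (l i) (c x) =
      ∑ i, l i * log (l i) - ∑ x, (∑ i, a x i * l i) * log (c x) := by
  have hent : ∑ x, ∑ i, a x i * (l i * log (l i)) = ∑ i, l i * log (l i) := by
    rw [sum_comm]; simp [← sum_mul, hcol]
  have hrow : ∀ x, ∑ i, a x i * klTerm (l i) (c x) =
      ∑ i, a x i * (l i * log (l i)) - (∑ i, a x i * l i) * log (c x) := by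
    intro x
    have hc : ∑ i, a x i * c x = ∑ i, a x i * l i := by rw [← sum_mul, mul_comm, hmean]
    simp only [klTerm, mul_add, mul_sub, sum_add_distrib, sum_sub_distrib, sum_mul, hc, mul_assoc]
    ring
  rw [sum_congr rfl fun x _ ↦ hrow x, sum_sub_distrib, hent]

theorem sum_mul_log_eq_sum_mul_log_iff (ha : ∀ x i, 0 ≤ a x i) (hl : ∀ i, 0 ≤ l i)
    (hc : ∀ x, 0 ≤ c x) (hcol : ∀ i, ∑ x, a x i = 1)
    (hmean : ∀ x, c x * ∑ i, a x i = ∑ i, a x i * l i) :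
    ∑ x, (∑ i, a x i * l i) * log (c x) = ∑ i, l i * log (l i) ↔
      ∀ x i, a x i * (l i - c x) = 0 := by
  have hsupp : ∀ x i, c x = 0 → a x i * l i = 0 := fun x i hx ↦ by
    have hrow : ∑ i, a x i * l i = 0 := by rw [← hmean x, hx, zero_mul]
    exact congrFun ((Fintype.sum_eq_zero_iff_of_nonneg fun i ↦ mul_nonneg (ha x i) (hl i)).1 hrow) i
  have hterm x i := mul_klTerm_nonneg_and_eq_zero_iff (ha x i) (hl i) (hc x) (hsupp x i)
  rw [eq_comm, ← sub_eq_zero, ← sum_sum_mul_klTerm hcol hmean,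
    sum_eq_zero_iff_of_nonneg fun x _ ↦ sum_nonneg fun i _ ↦ (hterm x i).1]
  simp only [mem_univ, forall_const, sum_eq_zero_iff_of_nonneg fun i _ ↦ (hterm _ i).1,
    (hterm _ _).2]

theorem mul_sub_eq_zero_of_eq_sum (ha : ∀ x i, 0 ≤ a x i) (hcol : ∀ i, ∑ x, a x i = 1)
    (hmean : ∀ x, c x * ∑ i, a x i = ∑ i, a x i * l i) (hl : ∀ i, l i = ∑ x, c x * a x i)
    (x : X) (i : ι) : a x i * (l i - c x) = 0 := by
  have hrow : ∀ x, ∑ i, a x i * (l i - c x) = 0 := fun x ↦ by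
    have h := hmean x
    rw [mul_sum] at h
    simp only [mul_sub, sum_sub_distrib, mul_comm (a x _) (c x), h, sub_self]
  have hcol' : ∀ i, ∑ x, a x i * (l i - c x) = 0 := fun i ↦ by
    simp only [mul_sub, sum_sub_distrib, ← sum_mul, hcol, one_mul, mul_comm (a _ i) (c _), ← hl,
      sub_self]
  have hsq : ∑ x, ∑ i, a x i * (l i - c x) * (l i - c x) = 0 := by
    simp only [mul_sub (a _ _ * _), sum_sub_distrib, ← sum_mul, hrow, zero_mul, sub_zero]
    rw [sum_comm]
    simp only [mul_comm _ (l _), ← mul_sum, hcol', mul_zero, sum_const_zero]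
  have hnn : ∀ x i, 0 ≤ a x i * (l i - c x) * (l i - c x) := fun x i ↦ by
    rw [mul_assoc]; exact mul_nonneg (ha x i) (mul_self_nonneg _)
  have h0 := (sum_eq_zero_iff_of_nonneg fun i _ ↦ hnn x i).1
    ((sum_eq_zero_iff_of_nonneg fun x _ ↦ sum_nonneg fun i _ ↦ hnn x i).1 hsq x (mem_univ x))
    i (mem_univ i)
  exact mul_self_eq_zero.1 (by linear_combination a x i * h0)

end Gibbs

namespace Matrix.PosSemidef
variable {𝕜 n : Type*} [RCLike 𝕜] [Fintype n]

open scoped MatrixOrder in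
lemma re_trace_conjTranspose_mul_mul_eq_zero_iff {P : Matrix n n 𝕜} (hP : P.PosSemidef)
    (M : Matrix n n 𝕜) : RCLike.re (Mᴴ * P * M).trace = 0 ↔ P * M = 0 := by
  classical
  have hnn := RCLike.nonneg_iff.1 (hP.conjTranspose_mul_mul_same M).trace_nonneg
  have hre : RCLike.re (Mᴴ * P * M).trace = 0 ↔ (Mᴴ * P * M).trace = 0 := by
    rw [RCLike.ext_iff (K := 𝕜)]; simp [hnn.2]
  obtain ⟨B, rfl⟩ := CStarAlgebra.nonneg_iff_eq_star_mul_self.mp hP.nonneg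
  rw [hre, star_eq_conjTranspose, show Mᴴ * (Bᴴ * B) * M = (B * M)ᴴ * (B * M) by
    simp [Matrix.mul_assoc], trace_conjTranspose_mul_self_eq_zero_iff]
  refine ⟨fun h ↦ by rw [Matrix.mul_assoc, h, Matrix.mul_zero], fun h ↦ ?_⟩
  rw [← conjTranspose_mul_self_eq_zero, conjTranspose_mul, Matrix.mul_assoc,
    ← Matrix.mul_assoc Bᴴ, h, Matrix.mul_zero]

end Matrix.PosSemidef

namespace Matrix.IsHermitian
variable {𝕜 n : Type*} [RCLike 𝕜] [Fintype n] [DecidableEq n] {A : Matrix n n 𝕜}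
  (hA : A.IsHermitian)

/-- `⟨vᵢ, P vᵢ⟩` for the orthonormal eigenvectors `vᵢ` of `A`. -/
def eigenbasisDiag (P : Matrix n n 𝕜) (i : n) : ℝ :=
  RCLike.re (conjStarAlgAut 𝕜 _ (star hA.eigenvectorUnitary) P i i)

lemma eigenbasisDiag_nonneg {P : Matrix n n 𝕜} (hP : P.PosSemidef) (i : n) :
    0 ≤ hA.eigenbasisDiag P i := by
  have h := (hP.conjTranspose_mul_mul_same (hA.eigenvectorUnitary : Matrix n n 𝕜)).diag_nonneg
    (i := i)
  simpa [eigenbasisDiag, star_eq_conjTranspose] using (RCLike.nonneg_iff.1 h).1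

lemma eigenbasisDiag_sum_smul {X : Type*} [Fintype X] (c : X → ℝ) (P : X → Matrix n n 𝕜)
    (i : n) : hA.eigenbasisDiag (∑ x, c x • P x) i = ∑ x, c x * hA.eigenbasisDiag (P x) i := by
  simp [eigenbasisDiag, Matrix.sum_apply, map_sum, RCLike.smul_re]

lemma eigenbasisDiag_one (i : n) : hA.eigenbasisDiag 1 i = 1 := by
  simp [eigenbasisDiag]

lemma eigenbasisDiag_self (i : n) : hA.eigenbasisDiag A i = hA.eigenvalues i := by
  simp only [eigenbasisDiag, conjStarAlgAut_star_eigenvectorUnitary, diagonal_apply_eq,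
    Function.comp_apply, RCLike.ofReal_re]

lemma re_trace_mul_cfc (P : Matrix n n 𝕜) (f : ℝ → ℝ) :
    RCLike.re (P * cfc f A).trace = ∑ i, hA.eigenbasisDiag P i * f (hA.eigenvalues i) := by
  rw [hA.cfc_eq, IsHermitian.cfc, conjStarAlgAut_apply, ← Matrix.mul_assoc, trace_mul_cycle,
    ← Matrix.mul_assoc]
  simp [eigenbasisDiag, trace, Matrix.mul_diagonal, map_sum]

lemma re_trace_mul (P : Matrix n n 𝕜) :
    RCLike.re (P * A).trace = ∑ i, hA.eigenbasisDiag P i * hA.eigenvalues i := by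
  simpa [cfc_id ℝ A hA.isSelfAdjoint] using hA.re_trace_mul_cfc P id

lemma re_trace (P : Matrix n n 𝕜) : RCLike.re P.trace = ∑ i, hA.eigenbasisDiag P i := by
  simpa [cfc_one ℝ A hA.isSelfAdjoint] using hA.re_trace_mul_cfc P 1

lemma mul_eq_smul_of_eigenbasisDiag_mul_sub_eq_zero {P : Matrix n n 𝕜} (hP : P.PosSemidef)
    {c : ℝ} (h : ∀ i, hA.eigenbasisDiag P i * (hA.eigenvalues i - c) = 0) : P * A = c • P := by
  set M := cfc (fun t ↦ t - c) A with hM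
  have hMA : M = A - c • 1 := by
    rw [hM, cfc_sub .., cfc_id' .., cfc_const .., Algebra.algebraMap_eq_smul_one]
  have hMM : Mᴴ * P * M = M * P * M := by
    rw [show Mᴴ = M from (cfc_predicate _ A : IsSelfAdjoint M)]
  have hPM : P * A - c • P = P * M := by
    rw [hMA, Matrix.mul_sub, Matrix.mul_smul, Matrix.mul_one]
  rw [← sub_eq_zero, hPM, ← hP.re_trace_conjTranspose_mul_mul_eq_zero_iff, hMM, trace_mul_cycle,
    trace_mul_comm, hM, ← cfc_mul .., hA.re_trace_mul_cfc]
  exact sum_eq_zero fun i _ ↦ by rw [← mul_assoc, h, zero_mul]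

end Matrix.IsHermitian

theorem obsEnt_eq_vonNeumann_iff_macroscopic_general {d : ℕ} {X : Type} [Fintype X]
    (P : X → Matrix (Fin d) (Fin d) ℂ)
    (hPpos : ∀ x, (P x).PosSemidef) (hPsum : ∑ x, P x = 1)
    (ρ : Matrix (Fin d) (Fin d) ℂ) (hρ : ρ.PosSemidef) :
    obsEnt P ρ = -∑ i, (hρ.1.eigenvalues i) * Real.log (hρ.1.eigenvalues i) ↔
      ρ = ∑ x, (((P x * ρ).trace.re) / ((P x).trace.re)) • P x := by
  set a := fun x ↦ hρ.1.eigenbasisDiag (P x)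
  set l := hρ.1.eigenvalues
  have ha : ∀ x i, 0 ≤ a x i := fun x ↦ hρ.1.eigenbasisDiag_nonneg (hPpos x)
  have hcol : ∀ i, ∑ x, a x i = 1 := fun i ↦ by
    simpa [hPsum, hρ.1.eigenbasisDiag_one] using (hρ.1.eigenbasisDiag_sum_smul 1 P i).symm
  have hp : ∀ x, (P x * ρ).trace.re = ∑ i, a x i * l i := fun x ↦ hρ.1.re_trace_mul (P x)
  have hV : ∀ x, (P x).trace.re = ∑ i, a x i := fun x ↦ hρ.1.re_trace (P x)
  have hc : ∀ x, (P x * ρ).trace.re / (P x).trace.re = weightedMean (a x) l := fun x ↦ by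
    rw [weightedMean, hp, hV]
  have hmean x : weightedMean (a x) l * ∑ i, a x i = ∑ i, a x i * l i :=
    weightedMean_mul_sum (ha x) l
  simp_rw [obsEnt, hc, hp]
  rw [neg_inj, sum_mul_log_eq_sum_mul_log_iff ha hρ.eigenvalues_nonneg
    (fun x ↦ weightedMean_nonneg (ha x) hρ.eigenvalues_nonneg) hcol hmean]
  constructor
  · intro h
    have hPρ : ∀ x, P x * ρ = weightedMean (a x) l • P x := fun x ↦
      hρ.1.mul_eq_smul_of_eigenbasisDiag_mul_sub_eq_zero (hPpos x) (h x)
    rw [← Matrix.one_mul ρ, ← hPsum, sum_mul]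
    exact sum_congr rfl fun x _ ↦ hPρ x
  · intro h
    refine mul_sub_eq_zero_of_eq_sum ha hcol hmean fun i ↦ ?_
    have := congrArg (hρ.1.eigenbasisDiag · i) h
    simpa only [hρ.1.eigenbasisDiag_self, hρ.1.eigenbasisDiag_sum_smul] using this

/-- **Equality condition for the fundamental bound:** `S_P(ρ) = S(ρ)` iff `ρ` is
macroscopic for `P`, i.e. `ρ = ∑_x Tr[P_x ρ] P_x / V_x`. -/
theorem obsEnt_eq_vonNeumann_iff_macroscopic {d : ℕ} {X : Type} [Fintype X]
    (P : X → Matrix (Fin d) (Fin d) ℂ)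
    (hPpos : ∀ x, (P x).PosSemidef) (hPsum : ∑ x, P x = 1)
    (hV : ∀ x, 0 < (P x).trace.re)
    (ρ : Matrix (Fin d) (Fin d) ℂ) (hρ : ρ.PosSemidef) (hρ1 : ρ.trace = 1) :
    obsEnt P ρ = -∑ i, (hρ.1.eigenvalues i) * Real.log (hρ.1.eigenvalues i) ↔
      ρ = ∑ x, (((P x * ρ).trace.re) / ((P x).trace.re)) • P x :=
  obsEnt_eq_vonNeumann_iff_macroscopic_general P hPpos hPsum ρ hρ
end
end
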